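/- Let (π, T) be a contractive covariant representation of (A, α) on H, Δ := (I - T*T)^{1/2}, and D := closure of ΔH. Define on K := H ⊕ D ⊕ D ⊕ ⋯ the representation η(a) := diag(π(a), π(α(a))|D, π(α²(a))|D, ...) and the operator W whose matrix has T in position (0,0), Δ : H → D in position (1,0), and identity maps I_D in positions (k+1, k) for k ≥ 1, with all other entries zero. Then W is an isometry and Wη(α(a)) = η(a)W for all a ∈ A. -/

import Mathlib

/-!
In the decomposition `K = H ⊕ D ⊕ D ⊕ ⋯` the matrix of `W` says `W e = e T + u₀ Δ` and
`W uₙ = uₙ₊₁`, and that of `η b` says `η b e = e π(b)` and `η b uₙ = uₙ π(αⁿ⁺¹ b)|_D`. Both claims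
can be tested on these columns, whose ranges span a dense subspace. `W* W = 1` then comes down to
`T* T + Δ² = 1` and to the orthonormality of the shifted columns. `W η(α a) = η(a) W` comes down to
the covariance relation together with `Δ π(α a) = π(α a) Δ`: by covariance and its adjoint
`π(α a)` commutes with `T* T`, hence with every continuous function of it.
-/

open ContinuousLinearMap

theorem Commute.star_mul_self_of_mul_eq_mul {R : Type*} [Monoid R] [StarMul R] {t b c : R}
    (h : t * b = c * t) (h' : t * star b = star c * t) : Commute b (star t * t) := by
  have h'' : b * star t = star t * c := by simpa using congrArg star h'
  calc b * (star t * t) = star t * (c * t) := by rw [← mul_assoc, h'', mul_assoc]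
  _ = star t * t * b := by rw [← h, mul_assoc]

section CStarAlgebra

variable {A : Type*} [CStarAlgebra A] [PartialOrder A] [StarOrderedRing A]

theorem one_sub_star_mul_self_nonneg {a : A} (ha : ‖a‖ ≤ 1) : 0 ≤ 1 - star a * a := by
  rw [sub_nonneg, ← CStarAlgebra.norm_le_one_iff_of_nonneg _ (star_mul_self_nonneg a),
    CStarRing.norm_star_mul_self]
  exact mul_le_one₀ ha (norm_nonneg a) ha

theorem commute_sqrt_one_sub_star_mul_self {t b c : A} (h : t * b = c * t)
    (h' : t * star b = star c * t) : Commute b (CFC.sqrt (1 - star t * t)) :=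
  (((Commute.one_right b).sub_right (.star_mul_self_of_mul_eq_mul h h')).symm.cfcₙ_nnreal
    NNReal.sqrt).symm

end CStarAlgebra

namespace ContinuousLinearMap

section Composition

variable {R E F G V : Type*} [Semiring R] [TopologicalSpace E] [AddCommMonoid E] [Module R E]
  [TopologicalSpace F] [AddCommMonoid F] [Module R F] [TopologicalSpace G] [AddCommMonoid G]
  [Module R G] [TopologicalSpace V] [AddCommMonoid V] [Module R V]

theorem comp_comp_of_comp_eq_one {f : F →L[R] E} {g : E →L[R] F} (h : f ∘L g = 1)
    (X : V →L[R] E) : f ∘L g ∘L X = X := by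
  rw [← comp_assoc, h]
  rfl

theorem comp_comp_of_comp_eq_zero {f : F →L[R] G} {g : E →L[R] F} (h : f ∘L g = 0)
    (X : V →L[R] E) : f ∘L g ∘L X = 0 := by
  rw [← comp_assoc, h, zero_comp]

end Composition

theorem adjoint_comp_eq_zero_comm {𝕜 E F G : Type*} [RCLike 𝕜]
    [NormedAddCommGroup E] [InnerProductSpace 𝕜 E] [CompleteSpace E]
    [NormedAddCommGroup F] [InnerProductSpace 𝕜 F] [CompleteSpace F]
    [NormedAddCommGroup G] [InnerProductSpace 𝕜 G] [CompleteSpace G]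
    {f : E →L[𝕜] G} {g : F →L[𝕜] G} (h : adjoint f ∘L g = 0) : adjoint g ∘L f = 0 := by
  simpa [adjoint_comp] using congrArg adjoint h

theorem ext_of_comp_eq_of_dense {𝕜 H D K V : Type*} [RCLike 𝕜]
    [NormedAddCommGroup H] [NormedSpace 𝕜 H] [NormedAddCommGroup D] [NormedSpace 𝕜 D]
    [NormedAddCommGroup K] [NormedSpace 𝕜 K] [NormedAddCommGroup V] [NormedSpace 𝕜 V]
    {e : H →L[𝕜] K} {u : ℕ → D →L[𝕜] K}
    (htotal : (LinearMap.range (e : H →ₗ[𝕜] K) ⊔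
      ⨆ n, LinearMap.range (u n : D →ₗ[𝕜] K)).topologicalClosure = ⊤)
    {S₁ S₂ : K →L[𝕜] V} (he : S₁ ∘L e = S₂ ∘L e) (hu : ∀ n, S₁ ∘L u n = S₂ ∘L u n) :
    S₁ = S₂ := by
  refine ext_on (s := Set.range e ∪ ⋃ n, Set.range (u n)) ?_ ?_
  · simpa only [Submodule.span_union, Submodule.span_iUnion, ← ContinuousLinearMap.coe_coe,
      ← LinearMap.coe_range, Submodule.span_eq, Submodule.dense_iff_topologicalClosure_eq_top]
      using htotal
  · rintro _ (⟨x, rfl⟩ | ⟨_, ⟨n, rfl⟩, x, rfl⟩)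
    exacts [congr($he x), congr($(hu n) x)]

end ContinuousLinearMap

section HilbertSum

variable {𝕜 H D K : Type*} [RCLike 𝕜]
  [NormedAddCommGroup H] [InnerProductSpace 𝕜 H] [CompleteSpace H]
  [NormedAddCommGroup D] [InnerProductSpace 𝕜 D] [CompleteSpace D]
  [NormedAddCommGroup K] [InnerProductSpace 𝕜 K] [CompleteSpace K]

theorem ContinuousLinearMap.ext_of_adjoint_comp_eq_of_dense {e : H →L[𝕜] K} {u : ℕ → D →L[𝕜] K}
    (htotal : (LinearMap.range (e : H →ₗ[𝕜] K) ⊔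
      ⨆ n, LinearMap.range (u n : D →ₗ[𝕜] K)).topologicalClosure = ⊤)
    {V : Type*} [NormedAddCommGroup V] [InnerProductSpace 𝕜 V] [CompleteSpace V]
    {X Y : V →L[𝕜] K} (he : adjoint e ∘L X = adjoint e ∘L Y)
    (hu : ∀ n, adjoint (u n) ∘L X = adjoint (u n) ∘L Y) : X = Y := by
  refine adjoint.injective (ext_of_comp_eq_of_dense htotal ?_ fun n => ?_)
  · simpa [adjoint_comp] using congrArg adjoint he
  · simpa [adjoint_comp] using congrArg adjoint (hu n)

/-- `K = H ⊕ D ⊕ D ⊕ ⋯`, with `e` the inclusion of the first summand and `u n` that of the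
`(n + 1)`-st. -/
structure IsOrthogonalSum (e : H →L[𝕜] K) (u : ℕ → D →L[𝕜] K) : Prop where
  adjoint_e_comp_e : adjoint e ∘L e = 1
  adjoint_u_comp_u : ∀ n, adjoint (u n) ∘L u n = 1
  adjoint_e_comp_u : ∀ n, adjoint e ∘L u n = 0
  adjoint_u_comp_u_of_ne : ∀ m n, m ≠ n → adjoint (u m) ∘L u n = 0
  dense : (LinearMap.range (e : H →ₗ[𝕜] K) ⊔
    ⨆ n, LinearMap.range (u n : D →ₗ[𝕜] K)).topologicalClosure = ⊤

namespace IsOrthogonalSum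

variable {e : H →L[𝕜] K} {u : ℕ → D →L[𝕜] K}
  {V : Type*} [NormedAddCommGroup V] [InnerProductSpace 𝕜 V]

theorem adjoint_u_comp_e (hK : IsOrthogonalSum e u) (n : ℕ) : adjoint (u n) ∘L e = 0 :=
  adjoint_comp_eq_zero_comm (hK.adjoint_e_comp_u n)

theorem adjoint_e_comp_e_comp (hK : IsOrthogonalSum e u) (X : V →L[𝕜] H) :
    adjoint e ∘L e ∘L X = X :=
  comp_comp_of_comp_eq_one hK.adjoint_e_comp_e X

theorem adjoint_u_comp_u_comp (hK : IsOrthogonalSum e u) (n : ℕ) (X : V →L[𝕜] D) :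
    adjoint (u n) ∘L u n ∘L X = X :=
  comp_comp_of_comp_eq_one (hK.adjoint_u_comp_u n) X

theorem adjoint_e_comp_u_comp (hK : IsOrthogonalSum e u) (n : ℕ) (X : V →L[𝕜] D) :
    adjoint e ∘L u n ∘L X = 0 :=
  comp_comp_of_comp_eq_zero (hK.adjoint_e_comp_u n) X

theorem adjoint_u_comp_e_comp (hK : IsOrthogonalSum e u) (n : ℕ) (X : V →L[𝕜] H) :
    adjoint (u n) ∘L e ∘L X = 0 :=
  comp_comp_of_comp_eq_zero (hK.adjoint_u_comp_e n) X

theorem adjoint_u_comp_u_comp_of_ne (hK : IsOrthogonalSum e u) {m n : ℕ} (h : m ≠ n)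
    (X : V →L[𝕜] D) : adjoint (u m) ∘L u n ∘L X = 0 :=
  comp_comp_of_comp_eq_zero (hK.adjoint_u_comp_u_of_ne m n h) X

variable [CompleteSpace V]

theorem eq_comp_add_comp (hK : IsOrthogonalSum e u) {X : V →L[𝕜] K}
    (hX : ∀ n, n ≠ 0 → adjoint (u n) ∘L X = 0) :
    X = e ∘L (adjoint e ∘L X) + u 0 ∘L (adjoint (u 0) ∘L X) := by
  refine ext_of_adjoint_comp_eq_of_dense hK.dense ?_ fun n => ?_
  · rw [comp_add, hK.adjoint_e_comp_e_comp, hK.adjoint_e_comp_u_comp, add_zero]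
  · obtain rfl | hn := eq_or_ne n 0
    · rw [comp_add, hK.adjoint_u_comp_e_comp, hK.adjoint_u_comp_u_comp, zero_add]
    · rw [comp_add, hK.adjoint_u_comp_e_comp, hK.adjoint_u_comp_u_comp_of_ne hn,
        hX n hn, add_zero]

theorem eq_comp (hK : IsOrthogonalSum e u) {X : V →L[𝕜] K} (n : ℕ) (heX : adjoint e ∘L X = 0)
    (hX : ∀ m, m ≠ n → adjoint (u m) ∘L X = 0) : X = u n ∘L (adjoint (u n) ∘L X) := by
  refine ext_of_adjoint_comp_eq_of_dense hK.dense ?_ fun m => ?_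
  · rw [heX, hK.adjoint_e_comp_u_comp]
  · obtain rfl | hm := eq_or_ne m n
    · rw [hK.adjoint_u_comp_u_comp]
    · rw [hX m hm, hK.adjoint_u_comp_u_comp_of_ne hm]

theorem adjoint_comp_self_eq_one (hK : IsOrthogonalSum e u) {W : K →L[𝕜] K} {T : H →L[𝕜] H}
    {Δ : H →L[𝕜] D} (hWe : W ∘L e = e ∘L T + u 0 ∘L Δ) (hWu : ∀ n, W ∘L u n = u (n + 1))
    (hTΔ : adjoint T ∘L T + adjoint Δ ∘L Δ = 1) : adjoint W ∘L W = 1 := by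
  refine ext_of_comp_eq_of_dense hK.dense ?_ fun n => ?_ <;>
    refine ext_of_adjoint_comp_eq_of_dense hK.dense ?_ fun m => ?_ <;>
    simp only [comp_assoc, one_def, id_comp] <;>
    rw [← comp_assoc (adjoint _) (adjoint W), ← adjoint_comp]
  · rw [hWe, hK.adjoint_e_comp_e, ← hTΔ]
    simp only [map_add, adjoint_comp, add_comp, comp_add, comp_assoc, hK.adjoint_e_comp_e_comp,
      hK.adjoint_e_comp_u_comp, hK.adjoint_u_comp_e_comp, hK.adjoint_u_comp_u_comp, comp_zero,
      add_zero, zero_add]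
  · rw [hWu, hWe, hK.adjoint_u_comp_e, comp_add, hK.adjoint_u_comp_e_comp,
      hK.adjoint_u_comp_u_comp_of_ne m.succ_ne_zero, add_zero]
  · rw [hWe, hWu, hK.adjoint_e_comp_u, map_add, add_comp, adjoint_comp, adjoint_comp,
      comp_assoc, comp_assoc, hK.adjoint_e_comp_u,
      hK.adjoint_u_comp_u_of_ne 0 (n + 1) n.succ_ne_zero.symm, comp_zero, comp_zero, add_zero]
  · rw [hWu, hWu]
    obtain rfl | hmn := eq_or_ne m n
    · rw [hK.adjoint_u_comp_u, hK.adjoint_u_comp_u]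
    · rw [hK.adjoint_u_comp_u_of_ne _ _ (by omega), hK.adjoint_u_comp_u_of_ne _ _ hmn]

theorem comp_eq_comp (hK : IsOrthogonalSum e u) {W X Y : K →L[𝕜] K} {T P Q : H →L[𝕜] H}
    {Δ : H →L[𝕜] D} {R S : ℕ → D →L[𝕜] D}
    (hWe : W ∘L e = e ∘L T + u 0 ∘L Δ) (hWu : ∀ n, W ∘L u n = u (n + 1))
    (hXe : X ∘L e = e ∘L P) (hXu : ∀ n, X ∘L u n = u n ∘L R n)
    (hYe : Y ∘L e = e ∘L Q) (hYu : ∀ n, Y ∘L u n = u n ∘L S n)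
    (hTP : T ∘L P = Q ∘L T) (hΔP : Δ ∘L P = S 0 ∘L Δ) (hRS : ∀ n, R n = S (n + 1)) :
    W ∘L X = Y ∘L W := by
  refine ext_of_comp_eq_of_dense hK.dense ?_ fun n => ?_
  · calc (W ∘L X) ∘L e = (W ∘L e) ∘L P := by rw [comp_assoc, hXe, comp_assoc]
      _ = e ∘L (T ∘L P) + u 0 ∘L (Δ ∘L P) := by rw [hWe, add_comp, comp_assoc, comp_assoc]
      _ = (Y ∘L e) ∘L T + (Y ∘L u 0) ∘L Δ := by rw [hTP, hΔP, hYe, hYu, comp_assoc, comp_assoc]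
      _ = (Y ∘L W) ∘L e := by rw [comp_assoc Y W, hWe, comp_add]; rfl
  · calc (W ∘L X) ∘L u n = (W ∘L u n) ∘L R n := by rw [comp_assoc, hXu, comp_assoc]
      _ = Y ∘L u (n + 1) := by rw [hWu, hYu, hRS]
      _ = (Y ∘L W) ∘L u n := by rw [comp_assoc, hWu]

end IsOrthogonalSum

end HilbertSum

theorem Submodule.comp_eq_comp_of_subtypeL_comp_eq {R M : Type*} [Ring R] [AddCommGroup M]
    [Module R M] [TopologicalSpace M] {D : Submodule R M} {X : M →L[R] D} {Δ B : M →L[R] M}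
    {S : D →L[R] D} (hX : D.subtypeL ∘L X = Δ) (hB : Commute B Δ)
    (hS : D.subtypeL ∘L S = B ∘L D.subtypeL) : X ∘L B = S ∘L X := by
  refine cancel_left (g := D.subtypeL) Subtype.val_injective ?_
  calc D.subtypeL ∘L X ∘L B = Δ ∘L B := by rw [← comp_assoc, hX]
    _ = B ∘L Δ := hB.eq.symm
    _ = D.subtypeL ∘L S ∘L X := by rw [← hX, ← comp_assoc, ← hS, comp_assoc]

theorem Submodule.adjoint_subtypeL_comp_subtypeL {𝕜 H : Type*} [RCLike 𝕜] [NormedAddCommGroup H]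
    [InnerProductSpace 𝕜 H] [CompleteSpace H] (D : Submodule 𝕜 H) [CompleteSpace D] :
    adjoint D.subtypeL ∘L D.subtypeL = 1 := by
  rw [Submodule.adjoint_subtypeL]
  ext x
  simp

theorem adjoint_comp_self_eq_of_subtypeL_comp_eq_sqrt {H : Type*} [NormedAddCommGroup H]
    [InnerProductSpace ℂ H] [CompleteSpace H] {D : Submodule ℂ H} [CompleteSpace D]
    {X : H →L[ℂ] D} {P : H →L[ℂ] H} (hP : 0 ≤ P) (hX : D.subtypeL ∘L X = CFC.sqrt P) :
    adjoint X ∘L X = P := calc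
  adjoint X ∘L X = adjoint X ∘L (adjoint D.subtypeL ∘L D.subtypeL) ∘L X := by
    rw [D.adjoint_subtypeL_comp_subtypeL]; rfl
  _ = adjoint (CFC.sqrt P) ∘L CFC.sqrt P := by rw [← hX, adjoint_comp]; rfl
  _ = P := by
    rw [(CFC.sqrt_nonneg P).isSelfAdjoint.adjoint_eq]
    exact CFC.sqrt_mul_sqrt_self P hP

theorem schaeffer_isometric_dilation
    {A : Type*} [CStarAlgebra A]
    {H : Type*} [NormedAddCommGroup H] [InnerProductSpace ℂ H] [CompleteSpace H]
    {K : Type*} [NormedAddCommGroup K] [InnerProductSpace ℂ K] [CompleteSpace K]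
    (α : A →⋆ₐ[ℂ] A)
    (π : A →⋆ₐ[ℂ] (H →L[ℂ] H))
    (T : H →L[ℂ] H) (hT : ‖T‖ ≤ 1)
    (hcov : ∀ a : A, T ∘L π (α a) = π a ∘L T)
    -- the defect operator `Δ` and defect space `D`:
    (Δ : H →L[ℂ] H) (hΔ : Δ = CFC.sqrt (1 - star T * T))
    (D : Submodule ℂ H) [CompleteSpace D]
    -- `K = H ⊕ D ⊕ D ⊕ ⋯`, internally:
    (e : H →L[ℂ] K) (u : ℕ → (D →L[ℂ] K))
    (he : adjoint e ∘L e = 1) (hu : ∀ n, adjoint (u n) ∘L u n = 1)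
    (heu : ∀ n, adjoint e ∘L u n = 0)
    (huu : ∀ m n, m ≠ n → adjoint (u m) ∘L u n = 0)
    (htotal : (LinearMap.range (e : H →ₗ[ℂ] K) ⊔ ⨆ n, LinearMap.range (u n : D →ₗ[ℂ] K)).topologicalClosure = ⊤)
    -- the matrix entries of `W`:
    (W : K →L[ℂ] K)
    (hW00 : adjoint e ∘L W ∘L e = T)
    (hW10 : D.subtypeL ∘L (adjoint (u 0) ∘L W ∘L e) = Δ)
    (hWsub : ∀ k, adjoint (u (k + 1)) ∘L W ∘L u k = 1)
    (hW0n : ∀ n, adjoint e ∘L W ∘L u n = 0)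
    (hWn0 : ∀ n, n ≠ 0 → adjoint (u n) ∘L W ∘L e = 0)
    (hWmn : ∀ m n, m ≠ n + 1 → adjoint (u m) ∘L W ∘L u n = 0)
    -- the matrix entries of `η`:
    (η : A → (K →L[ℂ] K))
    (hη00 : ∀ a, adjoint e ∘L η a ∘L e = π a)
    (hηdiag : ∀ a n, D.subtypeL ∘L (adjoint (u n) ∘L η a ∘L u n) =
      π ((⇑α)^[n + 1] a) ∘L D.subtypeL)
    (hηeu : ∀ a n, adjoint e ∘L η a ∘L u n = 0)
    (hηue : ∀ a n, adjoint (u n) ∘L η a ∘L e = 0)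
    (hηuu : ∀ a m n, m ≠ n → adjoint (u m) ∘L η a ∘L u n = 0) :
    adjoint W ∘L W = 1 ∧ ∀ a : A, W ∘L η (α a) = η a ∘L W := by
  have hK : IsOrthogonalSum e u := ⟨he, hu, heu, huu, htotal⟩
  set Δ' := adjoint (u 0) ∘L W ∘L e
  set ρ : A → ℕ → (D →L[ℂ] D) := fun b n => adjoint (u n) ∘L η b ∘L u n
  have hWe : W ∘L e = e ∘L T + u 0 ∘L Δ' := by
    rw [← hW00]; exact hK.eq_comp_add_comp hWn0
  have hWu (k : ℕ) : W ∘L u k = u (k + 1) := by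
    rw [hK.eq_comp (k + 1) (hW0n k) fun m hm => hWmn m k hm, hWsub k]; rfl
  have hηe (b : A) : η b ∘L e = e ∘L π b := by
    rw [hK.eq_comp_add_comp fun n _ => hηue b n, hη00 b, hηue b 0, comp_zero, add_zero]
  have hηu (b : A) (n : ℕ) : η b ∘L u n = u n ∘L ρ b n :=
    hK.eq_comp n (hηeu b n) fun m hm => hηuu b m n hm
  refine ⟨hK.adjoint_comp_self_eq_one hWe hWu ?_, fun a => hK.comp_eq_comp hWe hWu
    (hηe _) (hηu _) (hηe a) (hηu a) (hcov a) ?_ fun n => ?_⟩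
  · rw [adjoint_comp_self_eq_of_subtypeL_comp_eq_sqrt
      (one_sub_star_mul_self_nonneg hT) (hW10.trans hΔ)]
    exact add_sub_cancel _ _
  · refine Submodule.comp_eq_comp_of_subtypeL_comp_eq hW10 ?_ (hηdiag a 0)
    rw [hΔ]
    have hcov_star := hcov (star a)
    rw [map_star, map_star, map_star] at hcov_star
    exact commute_sqrt_one_sub_star_mul_self (hcov a) hcov_star
  · refine cancel_left (g := D.subtypeL) Subtype.val_injective ?_
    rw [hηdiag, hηdiag, ← Function.iterate_succ_apply]
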